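/- arXiv:2602.15829 — 3 statements merged into one kernel-verified Lean document; each statement's English description precedes it below -/
import Mathlib

section
/- For every task (p, σ) over ℕ (with σ valued in [0,1]), every performance level α : ℝ, and every m : ℕ, the unconditional task complexity is finite if and only if the conditional task complexity is finite: K_{p,σ}(α) < ⊤ ↔ K_{p,σ}(α ∣ m) < ⊤ (in ℕ∞). -/
/-- Program length: the size in bits of the encoding of a partial recursive code. -/
def progLen (c : Nat.Partrec.Code) : ℕ := Nat.size (Encodable.encode c)

open Classical in
/-- Score of a single (possibly undefined) output `o` on input `x` under scoring function `σ`: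
`σ x y` if `o = Part.some y`, and `0` if `o` is the undefined computation. -/
noncomputable def outScore (σ : ℕ → ℕ → ℝ) (x : ℕ) (o : Part ℕ) : ℝ :=
  if h : o.Dom then σ x (o.get h) else 0

/-- Score of a code `c` on the task `(p, σ)`. -/
noncomputable def score (p : PMF ℕ) (σ : ℕ → ℕ → ℝ) (c : Nat.Partrec.Code) : ℝ :=
  ∑' x : ℕ, (p x).toReal * outScore σ x (c.eval x)

/-- Conditional score of a code `c` on the task `(p, σ)`, conditioned on `m`. -/
noncomputable def condScore (p : PMF ℕ) (σ : ℕ → ℕ → ℝ) (c : Nat.Partrec.Code) (m : ℕ) : ℝ :=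
  ∑' x : ℕ, (p x).toReal * outScore σ x (c.eval (Nat.pair m x))

/-- Task complexity at performance `α`. -/
noncomputable def taskComplexity (p : PMF ℕ) (σ : ℕ → ℕ → ℝ) (α : ℝ) : ℕ∞ :=
  sInf { n : ℕ∞ | ∃ c : Nat.Partrec.Code, score p σ c ≥ α ∧ n = (progLen c : ℕ∞) }

/-- Conditional task complexity at performance `α`, conditioned on `m`. -/
noncomputable def condTaskComplexity (p : PMF ℕ) (σ : ℕ → ℕ → ℝ) (α : ℝ) (m : ℕ) : ℕ∞ :=
  sInf { n : ℕ∞ | ∃ c : Nat.Partrec.Code, condScore p σ c m ≥ α ∧ n = (progLen c : ℕ∞) }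

/-- Kolmogorov complexity of a natural number `s`. -/
noncomputable def kolmogorov (s : ℕ) : ℕ∞ :=
  sInf { n : ℕ∞ | ∃ c : Nat.Partrec.Code, c.eval 0 = Part.some s ∧ n = (progLen c : ℕ∞) }

/-!
Both complexities are infima of program lengths, so each is finite exactly when some program
reaches score `α`. A program `c` for the task becomes a conditional one by first projecting
`⟨m, x⟩` to `x` (`c.comp .right`), and a conditional program becomes an unconditional one by
fixing its first argument to `m` (`c.curry m`); neither changes the score.
-/

theorem sInf_setOf_natCast_lt_top_iff {α : Type*} (P : α → Prop) (f : α → ℕ) :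
    sInf {n : ℕ∞ | ∃ a, P a ∧ n = f a} < ⊤ ↔ ∃ a, P a := by
  rw [sInf_lt_iff]
  constructor
  · rintro ⟨_, ⟨a, ha, -⟩, -⟩
    exact ⟨a, ha⟩
  · rintro ⟨a, ha⟩
    exact ⟨_, ⟨a, ha, rfl⟩, ENat.natCast_lt_top _⟩

theorem Nat.Partrec.Code.eval_comp_right_pair (c : Nat.Partrec.Code) (m x : ℕ) :
    (c.comp .right).eval (Nat.pair m x) = c.eval x := by
  change (Part.some (Nat.unpair (Nat.pair m x)).2).bind c.eval = c.eval x
  rw [Nat.unpair_pair]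
  exact Part.bind_some x c.eval

section

variable (p : PMF ℕ) (σ : ℕ → ℕ → ℝ)

theorem taskComplexity_lt_top_iff (α : ℝ) :
    taskComplexity p σ α < ⊤ ↔ ∃ c, score p σ c ≥ α :=
  sInf_setOf_natCast_lt_top_iff _ progLen

theorem condTaskComplexity_lt_top_iff (α : ℝ) (m : ℕ) :
    condTaskComplexity p σ α m < ⊤ ↔ ∃ c, condScore p σ c m ≥ α :=
  sInf_setOf_natCast_lt_top_iff _ progLen

theorem condScore_comp_right (c : Nat.Partrec.Code) (m : ℕ) :
    condScore p σ (c.comp .right) m = score p σ c := by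
  simp only [condScore, score, Nat.Partrec.Code.eval_comp_right_pair]

theorem score_curry (c : Nat.Partrec.Code) (m : ℕ) :
    score p σ (c.curry m) = condScore p σ c m := by
  simp only [score, condScore, Nat.Partrec.Code.eval_curry]

end

theorem taskComplexity_lt_top_iff_condTaskComplexity_lt_top_general (p : PMF ℕ) (σ : ℕ → ℕ → ℝ)
    (α : ℝ) (m : ℕ) :
    taskComplexity p σ α < ⊤ ↔ condTaskComplexity p σ α m < ⊤ := by
  rw [taskComplexity_lt_top_iff, condTaskComplexity_lt_top_iff]
  constructor
  · rintro ⟨c, hc⟩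
    exact ⟨c.comp .right, by rwa [condScore_comp_right]⟩
  · rintro ⟨c, hc⟩
    exact ⟨c.curry m, by rwa [score_curry]⟩

/-- Unconditional task complexity is finite iff conditional task complexity is finite. -/
theorem taskComplexity_lt_top_iff_condTaskComplexity_lt_top (p : PMF ℕ) (σ : ℕ → ℕ → ℝ)
    (hσ : ∀ x y, 0 ≤ σ x y ∧ σ x y ≤ 1) (α : ℝ) (m : ℕ) :
    taskComplexity p σ α < ⊤ ↔ condTaskComplexity p σ α m < ⊤ :=
  taskComplexity_lt_top_iff_condTaskComplexity_lt_top_general p σ α m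
end

section
/- Task complexity generalises Kolmogorov complexity: fix s : ℕ and consider the point task with input distribution p := PMF.pure 0 and scoring function σ x y := if y = s then 1 else 0. Then the task complexity of this task at performance α = 1 equals the Kolmogorov complexity of s: K_{p,σ}(1) = K(s) (as elements of ℕ∞). -/
/-- Task complexity generalises Kolmogorov complexity: the complexity of the point task
for `s` at performance `1` equals the Kolmogorov complexity of `s`. -/
theorem taskComplexity_point_eq_kolmogorov (s : ℕ) :
    taskComplexity (PMF.pure 0) (fun _ y => if y = s then (1 : ℝ) else 0) 1
      = kolmogorov s := by
  have key : ∀ c : Nat.Partrec.Code,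
      score (PMF.pure 0) (fun _ y => if y = s then (1 : ℝ) else 0) c ≥ 1 ↔
        c.eval 0 = Part.some s := by
    intro c
    have hs : score (PMF.pure 0) (fun _ y => if y = s then (1 : ℝ) else 0) c
        = outScore (fun _ y => if y = s then (1 : ℝ) else 0) 0 (c.eval 0) := by
      unfold score
      rw [tsum_eq_single 0]
      · simp [PMF.pure_apply]
      · intro b hb
        simp [PMF.pure_apply, hb]
    rw [hs]
    unfold outScore
    constructor
    · intro h
      split_ifs at h with hd
      · by_cases he : (c.eval 0).get hd = s
        · exact Part.eq_some_iff.mpr ⟨hd, he ▸ rfl⟩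
        · simp only [he, if_false] at h; linarith
      · linarith
    · intro h
      rw [h]
      simp
  unfold taskComplexity kolmogorov
  apply congrArg
  ext n
  constructor
  · rintro ⟨c, hc, rfl⟩
    exact ⟨c, (key c).mp hc, rfl⟩
  · rintro ⟨c, hc, rfl⟩
    exact ⟨c, (key c).mpr hc, rfl⟩
end

section
/- Kolmogorov complexity is total but uncomputable: for every s : ℕ, K(s) < ⊤ (witnessed by the constant code Nat.Partrec.Code.const s, which satisfies (Nat.Partrec.Code.const s).eval 0 = Part.some s), and there is no computable function f : ℕ → ℕ such that f s = (K(s)).toNat for all s; equivalently, ¬ Computable (fun s => (K(s)).toNat). -/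
open Nat.Partrec Encodable

theorem kolmogorov_le_progLen {s : ℕ} {c : Code} (hc : c.eval 0 = Part.some s) :
    kolmogorov s ≤ progLen c :=
  sInf_le ⟨c, hc, rfl⟩

theorem exists_code_kolmogorov_eq (s : ℕ) :
    ∃ c : Code, c.eval 0 = Part.some s ∧ kolmogorov s = progLen c := by
  have hne : {n : ℕ∞ | ∃ c : Code, c.eval 0 = Part.some s ∧ n = progLen c}.Nonempty :=
    ⟨_, Code.const s, Code.eval_const s 0, rfl⟩
  exact csInf_mem hne

theorem kolmogorov_lt_top (s : ℕ) : kolmogorov s < ⊤ :=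
  (kolmogorov_le_progLen (Code.eval_const s 0)).trans_lt (ENat.natCast_lt_top _)

theorem progLen_le_encode (c : Code) : progLen c ≤ encode c :=
  Nat.size_le.2 Nat.lt_two_pow_self

theorem exists_lt_toNat_kolmogorov (n : ℕ) : ∃ s : ℕ, n < (kolmogorov s).toNat := by
  by_contra! hbounded
  choose g hg_eval hg_len using exists_code_kolmogorov_eq
  have hg_lt (s : ℕ) : encode (g s) < 2 ^ n := by
    have := hbounded s
    rw [hg_len, ENat.toNat_natCast] at this
    exact Nat.size_le.1 this
  have hg_inj : Function.Injective g := fun a b hab =>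
    Part.some_injective ((hg_eval a).symm.trans (hab ▸ hg_eval b))
  have : Finite ℕ := Finite.of_injective (fun s => (⟨encode (g s), hg_lt s⟩ : Fin (2 ^ n)))
    fun a b hab => hg_inj (encode_injective (Fin.val_eq_of_eq hab))
  exact not_finite ℕ

theorem exists_code_eval_zero_encode_lt {h : ℕ → ℕ} (hh : Computable h)
    (hunbounded : ∀ n, ∃ s, n < h s) :
    ∃ (c : Code) (s : ℕ), c.eval 0 = Part.some s ∧ encode c < h s := by
  have hsearch : Computable₂ fun (c : Code) (s : ℕ) => decide (encode c < h s) :=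
    Primrec.nat_lt.decide.to_comp.comp₂ (Computable.encode.comp Computable.fst).to₂
      (hh.comp Computable.snd).to₂
  obtain ⟨c, hc⟩ :=
    Code.fixed_point₂ (f := fun c _ => Nat.rfind fun s => decide (encode c < h s))
      ((Partrec.rfind hsearch.partrec₂).comp Computable.fst).to₂
  obtain ⟨m, hm⟩ := hunbounded (encode c)
  obtain ⟨s, hs, -⟩ :=
    Nat.rfind_min' (p := fun s => decide (encode c < h s)) (decide_eq_true hm)
  refine ⟨c, s, (congrFun hc 0).trans (Part.eq_some_iff.2 hs), ?_⟩
  simpa using Nat.rfind_spec hs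

/-- Kolmogorov complexity is total (finite for every `s`, witnessed by the constant code)
but uncomputable. -/
theorem kolmogorov_lt_top_and_not_computable :
    (∀ s : ℕ, (Nat.Partrec.Code.const s).eval 0 = Part.some s ∧ kolmogorov s < ⊤) ∧
      ¬ Computable (fun s : ℕ => (kolmogorov s).toNat) := by
  refine ⟨fun s => ⟨Code.eval_const s 0, kolmogorov_lt_top s⟩, fun hK => ?_⟩
  obtain ⟨c, s, hc, hlt⟩ := exists_code_eval_zero_encode_lt hK exists_lt_toNat_kolmogorov
  have hle : (kolmogorov s).toNat ≤ progLen c :=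
    ENat.toNat_le_of_le_natCast (kolmogorov_le_progLen hc)
  exact absurd (hle.trans (progLen_le_encode c)) hlt.not_ge
end
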